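/- For every positive integer n, the number of pairs (m,n') ∈ ℤ² with m² + m·n' + n'² = n equals 6·∑_{d ∣ n} χ₃(d), where χ₃ is the nontrivial character mod 3 (χ₃(d)=1 if d≡1 mod 3, −1 if d≡2 mod 3, 0 if 3∣d). -/

import Mathlib

/-- Eisenstein integers `a + b ω` with `ω² = -1 - ω`. -/
@[ext] structure Eis where
  re : ℤ
  im : ℤ
deriving DecidableEq

namespace Eis

instance : Zero Eis := ⟨⟨0, 0⟩⟩
instance : One Eis := ⟨⟨1, 0⟩⟩
instance : Add Eis := ⟨fun x y => ⟨x.re + y.re, x.im + y.im⟩⟩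
instance : Neg Eis := ⟨fun x => ⟨-x.re, -x.im⟩⟩
instance : Mul Eis := ⟨fun x y =>
  ⟨x.re * y.re - x.im * y.im, x.re * y.im + x.im * y.re - x.im * y.im⟩⟩

@[simp] theorem zero_re : (0 : Eis).re = 0 := rfl
@[simp] theorem zero_im : (0 : Eis).im = 0 := rfl
@[simp] theorem one_re : (1 : Eis).re = 1 := rfl
@[simp] theorem one_im : (1 : Eis).im = 0 := rfl
@[simp] theorem add_re (x y : Eis) : (x + y).re = x.re + y.re := rfl
@[simp] theorem add_im (x y : Eis) : (x + y).im = x.im + y.im := rfl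
@[simp] theorem neg_re (x : Eis) : (-x).re = -x.re := rfl
@[simp] theorem neg_im (x : Eis) : (-x).im = -x.im := rfl
@[simp] theorem mul_re (x y : Eis) : (x * y).re = x.re * y.re - x.im * y.im := rfl
@[simp] theorem mul_im (x y : Eis) :
    (x * y).im = x.re * y.im + x.im * y.re - x.im * y.im := rfl

instance commRing : CommRing Eis where
  add_assoc x y z := by ext <;> simp <;> ring
  zero_add x := by ext <;> simp
  add_zero x := by ext <;> simp
  add_comm x y := by ext <;> simp <;> ring
  neg_add_cancel x := by ext <;> simp
  mul_assoc x y z := by ext <;> simp <;> ring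
  one_mul x := by ext <;> simp
  mul_one x := by ext <;> simp
  left_distrib x y z := by ext <;> simp <;> ring
  right_distrib x y z := by ext <;> simp <;> ring
  mul_comm x y := by ext <;> simp <;> ring
  zero_mul x := by ext <;> simp
  mul_zero x := by ext <;> simp
  nsmul := fun n x => ⟨n * x.re, n * x.im⟩
  nsmul_zero := fun x => by ext <;> simp [HSMul.hSMul, SMul.smul]
  nsmul_succ := fun n x => by ext <;> simp [HSMul.hSMul, SMul.smul] <;> ring
  zsmul := fun n x => ⟨n * x.re, n * x.im⟩
  zsmul_zero' := fun x => by ext <;> simp [HSMul.hSMul, SMul.smul]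
  zsmul_succ' := fun n x => by ext <;> simp [HSMul.hSMul, SMul.smul] <;> ring
  zsmul_neg' := fun n x => by
    ext <;> simp [Int.negSucc_eq, HSMul.hSMul, SMul.smul] <;> ring

instance : Nontrivial Eis := ⟨⟨0, 1, by decide⟩⟩

@[simp] theorem sub_re (x y : Eis) : (x - y).re = x.re - y.re := rfl
@[simp] theorem sub_im (x y : Eis) : (x - y).im = x.im - y.im := rfl

@[simp] theorem intCast_re (n : ℤ) : (n : Eis).re = n := by
  induction n using Int.induction_on with
  | zero => rfl
  | succ k ih => push_cast; simp_all
  | pred k ih => push_cast; simp_all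
@[simp] theorem intCast_im (n : ℤ) : (n : Eis).im = 0 := by
  induction n using Int.induction_on with
  | zero => rfl
  | succ k ih => push_cast; simp_all
  | pred k ih => push_cast; simp_all

/-- conjugation, a ring hom -/
def conj : Eis →+* Eis where
  toFun x := ⟨x.re - x.im, -x.im⟩
  map_one' := by ext <;> simp
  map_mul' x y := by ext <;> simp <;> ring
  map_zero' := by ext <;> simp
  map_add' x y := by ext <;> simp <;> ring

@[simp] theorem conj_re (x : Eis) : (conj x).re = x.re - x.im := rfl
@[simp] theorem conj_im (x : Eis) : (conj x).im = -x.im := rfl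
@[simp] theorem conj_conj (x : Eis) : conj (conj x) = x := by ext <;> simp

def norm (x : Eis) : ℤ := x.re ^ 2 - x.re * x.im + x.im ^ 2

theorem norm_mul (x y : Eis) : norm (x * y) = norm x * norm y := by
  simp [norm]; ring

@[simp] theorem norm_conj (x : Eis) : norm (conj x) = norm x := by simp [norm]; ring

theorem norm_nonneg (x : Eis) : 0 ≤ norm x := by unfold norm; nlinarith [sq_nonneg (2*x.re - x.im), sq_nonneg x.im]

theorem norm_eq_zero_iff {x : Eis} : norm x = 0 ↔ x = 0 := by
  constructor
  · intro h
    unfold norm at h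
    have h1 : x.re = 0 := by nlinarith [sq_nonneg (2*x.re - x.im), sq_nonneg x.im, sq_nonneg (2*x.im - x.re), sq_nonneg x.re]
    have h2 : x.im = 0 := by nlinarith [sq_nonneg (2*x.im - x.re)]
    ext <;> simp [h1, h2]
  · rintro rfl; rfl

theorem mul_conj (x : Eis) : x * conj x = (norm x : Eis) := by
  ext <;> simp only [mul_re, mul_im, conj_re, conj_im, intCast_re, intCast_im, norm] <;> ring

instance : NoZeroDivisors Eis := by
  constructor
  intro a b h
  have h2 : norm a * norm b = 0 := by
    rw [← norm_mul, h]; simp [norm]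
  rcases mul_eq_zero.1 h2 with h' | h'
  · exact Or.inl (norm_eq_zero_iff.1 h')
  · exact Or.inr (norm_eq_zero_iff.1 h')

instance : IsDomain Eis := NoZeroDivisors.to_isDomain _

end Eis

namespace Eis

noncomputable instance : Div Eis :=
  ⟨fun x y => ⟨round (((x * conj y).re : ℚ) / ((norm y : ℤ) : ℚ)),
               round (((x * conj y).im : ℚ) / ((norm y : ℤ) : ℚ))⟩⟩

theorem div_def (x y : Eis) : x / y =
    ⟨round (((x * conj y).re : ℚ) / ((norm y : ℤ) : ℚ)),
     round (((x * conj y).im : ℚ) / ((norm y : ℤ) : ℚ))⟩ := rfl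

noncomputable instance : Mod Eis := ⟨fun x y => x - y * (x / y)⟩

theorem mod_def (x y : Eis) : x % y = x - y * (x / y) := rfl

theorem norm_mod_lt (x : Eis) {y : Eis} (hy : y ≠ 0) : (x % y).norm < y.norm := by
  have hn0 : norm y ≠ 0 := fun h => hy (norm_eq_zero_iff.1 h)
  have hn : (0 : ℤ) < norm y := lt_of_le_of_ne (norm_nonneg y) (Ne.symm hn0)
  set a : ℚ := (x.re : ℚ) with ha
  set b : ℚ := (x.im : ℚ) with hb
  set c : ℚ := (y.re : ℚ) with hc
  set d : ℚ := (y.im : ℚ) with hd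
  have hnq : ((norm y : ℤ) : ℚ) = c ^ 2 - c * d + d ^ 2 := by
    rw [norm]; push_cast; ring
  set n : ℚ := ((norm y : ℤ) : ℚ) with hndef
  have hnqpos : 0 < n := by rw [hndef]; exact_mod_cast hn
  have ht1 : (((x * conj y).re : ℤ) : ℚ) = a * c - a * d + b * d := by
    simp only [mul_re, conj_re, conj_im]; push_cast; ring
  have ht2 : (((x * conj y).im : ℤ) : ℚ) = b * c - a * d := by
    simp only [mul_im, conj_re, conj_im]; push_cast; ring
  set t1 : ℚ := (((x * conj y).re : ℤ) : ℚ) with hht1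
  set t2 : ℚ := (((x * conj y).im : ℤ) : ℚ) with hht2
  set q1 : ℤ := round (t1 / n) with hq1
  set q2 : ℤ := round (t2 / n) with hq2
  set e1 : ℚ := t1 / n - q1 with he1def
  set e2 : ℚ := t2 / n - q2 with he2def
  have h1 : ((x % y).re : ℚ) = c * e1 - d * e2 := by
    have : (x % y).re = x.re - (y.re * q1 - y.im * q2) := rfl
    rw [this, he1def, he2def]
    push_cast
    rw [← ha, ← hc, ← hd]
    field_simp
    rw [ht1, ht2, hnq]
    ring
  have h2 : ((x % y).im : ℚ) = c * e2 + d * e1 - d * e2 := by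
    have : (x % y).im = x.im - (y.re * q2 + y.im * q1 - y.im * q2) := rfl
    rw [this, he1def, he2def]
    push_cast
    rw [← hb, ← hc, ← hd]
    field_simp
    rw [ht1, ht2, hnq]
    ring
  have key : (((x % y).norm : ℤ) : ℚ) = n * (e1 ^ 2 - e1 * e2 + e2 ^ 2) := by
    rw [norm]; push_cast
    rw [h1, h2, hnq]
    ring
  have hee1 : |e1| ≤ 1 / 2 := by rw [he1def, hq1]; exact abs_sub_round _
  have hee2 : |e2| ≤ 1 / 2 := by rw [he2def, hq2]; exact abs_sub_round _
  rw [abs_le] at hee1 hee2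
  have hsmall : e1 ^ 2 - e1 * e2 + e2 ^ 2 ≤ 3 / 4 := by nlinarith
  have : (((x % y).norm : ℤ) : ℚ) < n := by
    rw [key]
    calc n * (e1 ^ 2 - e1 * e2 + e2 ^ 2) ≤ n * (3 / 4) := by
          exact mul_le_mul_of_nonneg_left hsmall (le_of_lt hnqpos)
      _ < n := by linarith
  rw [hndef] at this
  exact_mod_cast this

theorem natAbs_norm_mod_lt (x : Eis) {y : Eis} (hy : y ≠ 0) :
    (x % y).norm.natAbs < y.norm.natAbs := by
  have h := norm_mod_lt x hy
  have h1 := norm_nonneg (x % y)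
  have h2 := norm_nonneg y
  omega

theorem norm_le_norm_mul_left (x : Eis) {y : Eis} (hy : y ≠ 0) :
    (norm x).natAbs ≤ (norm (x * y)).natAbs := by
  rw [norm_mul, Int.natAbs_mul]
  have : 1 ≤ (norm y).natAbs := by
    have := norm_nonneg y
    have hn0 : norm y ≠ 0 := fun h => hy (norm_eq_zero_iff.1 h)
    omega
  exact Nat.le_mul_of_pos_right _ (by omega)

noncomputable instance : EuclideanDomain Eis :=
  { Eis.commRing, (inferInstance : Nontrivial Eis) with
    quotient := (· / ·)
    remainder := (· % ·)
    quotient_zero := fun x => by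
      simp [div_def, norm]
      rfl
    quotient_mul_add_remainder_eq := fun x y => by simp [mod_def]
    r := _
    r_wellFounded := (measure (Int.natAbs ∘ norm)).wf
    remainder_lt := fun x y hy => natAbs_norm_mod_lt x hy
    mul_left_not_lt := fun a b hb0 => not_lt_of_ge <| norm_le_norm_mul_left a hb0 }

example : UniqueFactorizationMonoid Eis := inferInstance

end Eis

namespace Eis

theorem norm_dvd_norm {z w : Eis} (h : z ∣ w) : norm z ∣ norm w := by
  obtain ⟨c, rfl⟩ := h; rw [norm_mul]; exact dvd_mul_right _ _

@[simp] theorem norm_intCast (n : ℤ) : norm (n : Eis) = n ^ 2 := by simp [norm]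

theorem norm_one_eis : norm 1 = 1 := rfl

theorem norm_eq_one_of_isUnit_int {n : ℤ} (hn : 0 ≤ n) (h : IsUnit n) : n = 1 := by
  rcases Int.isUnit_iff.1 h with h' | h' <;> omega

theorem isUnit_iff_norm {z : Eis} : IsUnit z ↔ norm z = 1 := by
  constructor
  · intro h
    have h1 : norm z ∣ 1 := by
      have h2 := norm_dvd_norm (h.dvd : z ∣ 1)
      rwa [norm_one_eis] at h2
    exact norm_eq_one_of_isUnit_int (norm_nonneg z) (isUnit_of_dvd_one h1)
  · intro h
    refine IsUnit.of_mul_eq_one (a := z) (conj z) ?_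
    rw [mul_conj, h]; norm_num

theorem prime_of_norm_prime {z : Eis} (hp : Prime (norm z)) : Prime z := by
  rw [← UniqueFactorizationMonoid.irreducible_iff_prime]
  constructor
  · intro hu
    rw [isUnit_iff_norm] at hu
    rw [hu] at hp
    exact not_prime_one hp
  · rintro a b rfl
    rw [norm_mul] at hp
    rcases hp.irreducible.isUnit_or_isUnit rfl with h | h
    · exact Or.inl (isUnit_iff_norm.2 (norm_eq_one_of_isUnit_int (norm_nonneg a) h))
    · exact Or.inr (isUnit_iff_norm.2 (norm_eq_one_of_isUnit_int (norm_nonneg b) h))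

theorem norm_mod3_ne_two (z : Eis) : ((norm z : ℤ) : ZMod 3) ≠ 2 := by
  have h : ((norm z : ℤ) : ZMod 3) = ((z.re + z.im : ℤ) : ZMod 3) ^ 2 := by
    have h0 : (norm z : ℤ) = (z.re + z.im) ^ 2 - 3 * (z.re * z.im) := by rw [norm]; ring
    rw [h0]; push_cast
    have h3 : (3 : ZMod 3) = 0 := rfl
    rw [h3]; ring
  rw [h]
  exact (by decide : ∀ x : ZMod 3, x ^ 2 ≠ 2) _

theorem natCast_mod3_eq_two {p : ℕ} (h2 : p % 3 = 2) : ((p : ℤ) : ZMod 3) = 2 := by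
  have : ((p % 3 : ℕ) : ZMod 3) = (p : ZMod 3) := ZMod.natCast_mod p 3
  rw [h2] at this
  push_cast
  rw [← this]; norm_num

theorem norm_ne_prime_two_mod3 {p : ℕ} (h2 : p % 3 = 2) (z : Eis) : norm z ≠ (p : ℤ) := by
  intro h
  apply norm_mod3_ne_two z
  rw [h]
  exact natCast_mod3_eq_two h2

theorem toNat_mul_eq_sq {a b : Eis} {p : ℕ} (h : norm a * norm b = (p : ℤ) ^ 2) :
    (norm a).toNat * (norm b).toNat = p ^ 2 := by
  have ha := norm_nonneg a; have hb := norm_nonneg b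
  have : ((norm a).toNat * (norm b).toNat : ℤ) = ((p ^ 2 : ℕ) : ℤ) := by
    push_cast
    rw [Int.toNat_of_nonneg ha, Int.toNat_of_nonneg hb]
    exact h
  exact_mod_cast this

theorem prime_intCast_of_mod3_eq_two {p : ℕ} (hp : p.Prime) (h2 : p % 3 = 2) :
    Prime ((p : ℤ) : Eis) := by
  rw [← UniqueFactorizationMonoid.irreducible_iff_prime]
  have hp2 : (2 : ℤ) ≤ (p : ℤ) := by exact_mod_cast hp.two_le
  constructor
  · intro hu
    rw [isUnit_iff_norm, norm_intCast] at hu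
    nlinarith
  · rintro a b hab
    have hnn : norm a * norm b = (p : ℤ) ^ 2 := by rw [← norm_mul, ← hab, norm_intCast]
    have ha' := toNat_mul_eq_sq hnn
    have hdvd : (norm a).toNat ∣ p ^ 2 := ⟨_, ha'.symm⟩
    obtain ⟨i, hi2, hia⟩ := (Nat.dvd_prime_pow hp).1 hdvd
    have hp0 : p ≠ 0 := hp.ne_zero
    interval_cases i
    · left
      rw [isUnit_iff_norm]
      have := norm_nonneg a
      simp at hia
      omega
    · exfalso
      apply norm_ne_prime_two_mod3 h2 a
      have := norm_nonneg a
      simp at hia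
      omega
    · right
      rw [isUnit_iff_norm]
      have hbt : (norm b).toNat = 1 := by
        rw [hia] at ha'
        have hppos : 0 < p ^ 2 := by positivity
        have h4 : p ^ 2 * (norm b).toNat = p ^ 2 * 1 := by rw [ha', mul_one]
        exact Nat.eq_of_mul_eq_mul_left hppos h4
      have := norm_nonneg b
      omega

end Eis

namespace Eis

@[simp] theorem mk_re (a b : ℤ) : (⟨a, b⟩ : Eis).re = a := rfl
@[simp] theorem mk_im (a b : ℤ) : (⟨a, b⟩ : Eis).im = b := rfl

@[simp] theorem natCast_re (n : ℕ) : (n : Eis).re = (n : ℤ) := by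
  rw [← Int.cast_natCast (R := Eis), intCast_re]
@[simp] theorem natCast_im (n : ℕ) : (n : Eis).im = 0 := by
  rw [← Int.cast_natCast (R := Eis), intCast_im]

theorem norm_lam : norm ⟨1, -1⟩ = 3 := rfl

theorem prime_lam : Prime (⟨1, -1⟩ : Eis) :=
  prime_of_norm_prime (by rw [norm_lam]; exact Int.prime_three)

theorem lam_dvd_three : (⟨1, -1⟩ : Eis) ∣ ((3 : ℤ) : Eis) :=
  ⟨⟨2, 1⟩, by
    ext <;> simp only [intCast_re, intCast_im, mul_re, mul_im, mk_re, mk_im] <;> norm_num⟩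

theorem lam_dvd_conj_lam : (⟨1, -1⟩ : Eis) ∣ conj ⟨1, -1⟩ :=
  ⟨⟨1, 1⟩, by
    ext <;> simp only [conj_re, conj_im, mul_re, mul_im, mk_re, mk_im] <;> norm_num⟩

theorem lam_dvd_of_three_dvd_norm {z : Eis} (h : (3 : ℤ) ∣ norm z) :
    (⟨1, -1⟩ : Eis) ∣ z := by
  have h1 : (⟨1, -1⟩ : Eis) ∣ ((norm z : ℤ) : Eis) :=
    dvd_trans lam_dvd_three ((Int.castRingHom Eis).map_dvd h)
  rw [← mul_conj] at h1
  rcases prime_lam.2.2 _ _ h1 with h2 | h2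
  · exact h2
  · have h3 := map_dvd conj h2
    rw [conj_conj] at h3
    exact dvd_trans lam_dvd_conj_lam h3

theorem intCast_dvd_of_dvd_norm {p : ℕ} (hp : Prime ((p : ℤ) : Eis)) {z : Eis}
    (h : (p : ℤ) ∣ norm z) : ((p : ℤ) : Eis) ∣ z := by
  have h1 : ((p : ℤ) : Eis) ∣ z * conj z := by rw [mul_conj]; exact (Int.castRingHom Eis).map_dvd h
  rcases hp.2.2 _ _ h1 with h2 | h2
  · exact h2
  · have h3 := map_dvd conj h2
    rw [conj_conj, map_intCast] at h3
    exact h3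

theorem not_isUnit_intCast {p : ℕ} (hp : p.Prime) : ¬ IsUnit ((p : ℤ) : Eis) := by
  rw [isUnit_iff_norm, norm_intCast]
  have : (2 : ℤ) ≤ (p : ℤ) := by exact_mod_cast hp.two_le
  nlinarith

theorem exists_root_cubic {p : ℕ} (hp : p.Prime) (h1 : p % 3 = 1) :
    ∃ x : ZMod p, x ^ 2 + x + 1 = 0 := by
  haveI : Fact p.Prime := ⟨hp⟩
  have hcard : Fintype.card (ZMod p)ˣ = p - 1 :=
    ZMod.card_units_eq_totient p ▸ Nat.totient_prime hp
  have h3 : 3 ∣ Fintype.card (ZMod p)ˣ := by rw [hcard]; omega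
  obtain ⟨g, hg⟩ := IsCyclic.exists_generator (α := (ZMod p)ˣ)
  have hog : orderOf g = p - 1 := by
    rw [orderOf_eq_card_of_forall_mem_zpowers hg, Nat.card_eq_fintype_card, hcard]
  set u := g ^ ((p - 1) / 3) with hu
  have hu3 : u ^ 3 = 1 := by
    rw [hu, ← pow_mul, Nat.div_mul_cancel (hcard ▸ h3), ← hog, pow_orderOf_eq_one]
  have hune : u ≠ 1 := by
    intro h
    have hh := orderOf_dvd_of_pow_eq_one (n := (p - 1) / 3) (x := g) (by rw [← hu, h])
    rw [hog] at hh
    have hp5 : 4 ≤ p := by have := hp.two_le; omega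
    have := Nat.le_of_dvd (by omega) hh
    omega
  refine ⟨(u : ZMod p), ?_⟩
  have h3' : ((u : ZMod p)) ^ 3 = 1 := by
    rw [← Units.val_pow_eq_pow_val, hu3, Units.val_one]
  have hne : ((u : ZMod p)) - 1 ≠ 0 := by
    intro h
    apply hune
    have : (u : ZMod p) = 1 := by linear_combination h
    exact Units.ext this
  have hfac : ((u : ZMod p) - 1) * ((u : ZMod p) ^ 2 + (u : ZMod p) + 1) = 0 := by
    linear_combination h3'
  rcases mul_eq_zero.1 hfac with h | h
  · exact absurd h hne
  · exact h

theorem exists_norm_eq_prime {p : ℕ} (hp : p.Prime) (h1 : p % 3 = 1) :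
    ∃ π : Eis, norm π = (p : ℤ) := by
  haveI : Fact p.Prime := ⟨hp⟩
  obtain ⟨x, hx⟩ := exists_root_cubic hp h1
  set m := x.val with hmdef
  have hm : ((m ^ 2 + m + 1 : ℕ) : ZMod p) = 0 := by
    push_cast
    rw [hmdef, ZMod.natCast_val, ZMod.cast_id]
    exact hx
  have hdvd : p ∣ m ^ 2 + m + 1 := (ZMod.natCast_eq_zero_iff _ p).1 hm
  set z : Eis := (⟨(m : ℤ), -1⟩ : Eis) with hzdef
  have hnz : norm z = (m : ℤ) ^ 2 + (m : ℤ) + 1 := by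
    rw [hzdef, norm]; simp only [mk_re, mk_im]; ring
  have hdvdz : (p : ℤ) ∣ norm z := by
    rw [hnz]
    exact_mod_cast Int.natCast_dvd_natCast.2 hdvd
  have hpz : ¬ Prime ((p : ℤ) : Eis) := by
    intro hpr
    obtain ⟨w, hw⟩ := intCast_dvd_of_dvd_norm hpr hdvdz
    have him : (-1 : ℤ) = (p : ℤ) * w.im := by
      have h5 := congrArg Eis.im hw
      simp only [hzdef, mk_im, mul_im, intCast_re, intCast_im, natCast_re, natCast_im,
        Int.cast_natCast, zero_mul, mul_zero, add_zero, sub_zero] at h5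
      exact h5
    have h5 : (p : ℤ) ∣ -1 := Dvd.intro _ him.symm
    have h6 : (p : ℤ) ∣ 1 := (dvd_neg).1 h5
    have := Int.le_of_dvd one_pos h6
    have := hp.two_le
    omega
  rw [← UniqueFactorizationMonoid.irreducible_iff_prime] at hpz
  have hpu := not_isUnit_intCast hp
  have hab : ∃ a b : Eis, ((p : ℤ) : Eis) = a * b ∧ ¬IsUnit a ∧ ¬IsUnit b := by
    simpa only [irreducible_iff, hpu, true_and, not_forall, not_or, exists_prop,
      not_false_iff] using hpz
  obtain ⟨a, b, hab, hua, hub⟩ := hab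
  have hnn : norm a * norm b = (p : ℤ) ^ 2 := by rw [← norm_mul, ← hab, norm_intCast]
  have ha' := toNat_mul_eq_sq hnn
  obtain ⟨i, hi2, hia⟩ := (Nat.dvd_prime_pow hp).1 ⟨_, ha'.symm⟩
  have hp0 : p ≠ 0 := hp.ne_zero
  interval_cases i
  · exfalso
    apply hua
    rw [isUnit_iff_norm]
    have := norm_nonneg a
    simp at hia
    omega
  · refine ⟨a, ?_⟩
    have := norm_nonneg a
    simp at hia
    omega
  · exfalso
    apply hub
    rw [isUnit_iff_norm]
    have hbt : (norm b).toNat = 1 := by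
      rw [hia] at ha'
      have hppos : 0 < p ^ 2 := by positivity
      have h4 : p ^ 2 * (norm b).toNat = p ^ 2 * 1 := by rw [ha', mul_one]
      exact Nat.eq_of_mul_eq_mul_left hppos h4
    have := norm_nonneg b
    omega

theorem not_associated_conj {p : ℕ} (hp : p.Prime) (h1 : p % 3 = 1) {π : Eis}
    (hπ : norm π = (p : ℤ)) : ¬ Associated π (conj π) := by
  intro h
  have hdvd : π ∣ conj π := h.dvd
  have d1 : π ∣ π - conj π := dvd_sub dvd_rfl hdvd
  have d2 : π ∣ π + conj π := dvd_add dvd_rfl hdvd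
  have e1 : π - conj π = (⟨π.im, 2 * π.im⟩ : Eis) := by
    ext <;> simp only [sub_re, sub_im, conj_re, conj_im, mk_re, mk_im] <;> ring
  have e2 : π + conj π = ((2 * π.re - π.im : ℤ) : Eis) := by
    ext <;> simp only [add_re, add_im, conj_re, conj_im, intCast_re, intCast_im] <;> ring
  have hn1 : norm (⟨π.im, 2 * π.im⟩ : Eis) = 3 * π.im ^ 2 := by
    rw [norm]; simp only [mk_re, mk_im]; ring
  have n1 : (p : ℤ) ∣ 3 * π.im ^ 2 := by
    have h2 := norm_dvd_norm d1
    rwa [hπ, e1, hn1] at h2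
  have n2 : (p : ℤ) ∣ (2 * π.re - π.im) ^ 2 := by
    have h2 := norm_dvd_norm d2
    rwa [hπ, e2, norm_intCast] at h2
  have hpZ : Prime ((p : ℕ) : ℤ) := Nat.prime_iff_prime_int.1 hp
  have hpb : (p : ℤ) ∣ π.im := by
    rcases hpZ.2.2 3 (π.im ^ 2) n1 with h3 | h3
    · exfalso
      have h4 : (p : ℤ) ∣ ((3 : ℕ) : ℤ) := by exact_mod_cast h3
      have h5 : p ∣ 3 := Int.natCast_dvd_natCast.1 h4
      have := (Nat.prime_dvd_prime_iff_eq hp Nat.prime_three).1 h5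
      omega
    · exact hpZ.dvd_of_dvd_pow h3
  have hpa : (p : ℤ) ∣ π.re := by
    have h4 : (p : ℤ) ∣ 2 * π.re - π.im := hpZ.dvd_of_dvd_pow n2
    have h5 : (p : ℤ) ∣ 2 * π.re := by
      have h6 := dvd_add h4 hpb
      simpa using h6
    rcases hpZ.2.2 2 π.re h5 with h6 | h6
    · exfalso
      have h7 : (p : ℤ) ∣ ((2 : ℕ) : ℤ) := by exact_mod_cast h6
      have h8 : p ∣ 2 := Int.natCast_dvd_natCast.1 h7
      have := (Nat.prime_dvd_prime_iff_eq hp Nat.prime_two).1 h8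
      omega
    · exact h6
  obtain ⟨u, hu⟩ := hpa
  obtain ⟨v, hv⟩ := hpb
  have hval : norm π = (p : ℤ) ^ 2 * (u ^ 2 - u * v + v ^ 2) := by
    rw [norm, hu, hv]; ring
  have hsq : ((p : ℤ)) ^ 2 ∣ (p : ℤ) := by
    have h9 : ((p : ℤ)) ^ 2 ∣ norm π := ⟨_, hval⟩
    rwa [hπ] at h9
  have hp2 : (2 : ℤ) ≤ (p : ℤ) := by exact_mod_cast hp.two_le
  have := Int.le_of_dvd (by positivity) hsq
  nlinarith

end Eis

namespace Eis

theorem norm_pow (z : Eis) (j : ℕ) : norm (z ^ j) = norm z ^ j := by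
  induction j with
  | zero => simpa using norm_one_eis
  | succ k ih => rw [pow_succ, norm_mul, ih, pow_succ]

theorem ne_zero_of_norm_pos {z : Eis} (h : 0 < norm z) : z ≠ 0 := by
  intro h0
  rw [h0] at h
  simp [norm] at h

/-- number of Eisenstein integers of norm `n` -/
noncomputable def countNorm (n : ℕ) : ℕ := Nat.card {z : Eis // norm z = (n : ℤ)}

theorem countNorm_one : countNorm 1 = 6 := by
  have hs : {z : Eis | norm z = ((1 : ℕ) : ℤ)} =
      (↑({⟨1,0⟩, ⟨-1,0⟩, ⟨0,1⟩, ⟨0,-1⟩, ⟨1,1⟩, ⟨-1,-1⟩} : Finset Eis) : Set Eis) := by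
    ext z
    rcases z with ⟨a, b⟩
    simp only [Set.mem_setOf_eq, Finset.coe_insert, Set.mem_insert_iff, Finset.coe_singleton,
      Set.mem_singleton_iff, norm, mk_re, mk_im, Nat.cast_one, Eis.mk.injEq]
    constructor
    · intro h
      have hb : -1 ≤ b ∧ b ≤ 1 := by
        constructor <;> nlinarith [sq_nonneg (2*a - b), sq_nonneg b]
      have ha : -1 ≤ a ∧ a ≤ 1 := by
        constructor <;> nlinarith [sq_nonneg (2*b - a), sq_nonneg a]
      obtain ⟨hb1, hb2⟩ := hb
      obtain ⟨ha1, ha2⟩ := ha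
      interval_cases a <;> interval_cases b <;> omega
    · rintro (⟨rfl, rfl⟩|⟨rfl, rfl⟩|⟨rfl, rfl⟩|⟨rfl, rfl⟩|⟨rfl, rfl⟩|⟨rfl, rfl⟩) <;> norm_num
  have h2 : countNorm 1 = ({z : Eis | norm z = ((1 : ℕ) : ℤ)}).ncard :=
    Nat.card_coe_set_eq _
  rw [h2, hs, Set.ncard_coe_finset]
  decide

theorem countNorm_step {q : Eis} (hq : q ≠ 0) {c m n : ℕ} (hn : n = c * m)
    (hnormq : norm q = (c : ℤ))
    (hdvd : ∀ z : Eis, norm z = (n : ℤ) → q ∣ z) :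
    countNorm n = countNorm m := by
  have hc0 : (c : ℤ) ≠ 0 := by
    rw [← hnormq]
    intro h
    exact hq (norm_eq_zero_iff.1 h)
  refine Nat.card_congr (Equiv.symm (Equiv.ofBijective
    (fun w : {w : Eis // norm w = (m : ℤ)} =>
      (⟨q * w.1, by rw [norm_mul, w.2, hnormq, hn]; push_cast; ring⟩ :
        {z : Eis // norm z = (n : ℤ)})) ⟨?_, ?_⟩))
  · intro w w' h
    exact Subtype.ext (mul_left_cancel₀ hq (congrArg Subtype.val h))
  · rintro ⟨z, hz⟩
    obtain ⟨w, hw⟩ := hdvd z hz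
    have hnw : norm w = (m : ℤ) := by
      have h1 : norm q * norm w = (n : ℤ) := by rw [← norm_mul, ← hw, hz]
      rw [hnormq, hn] at h1
      push_cast at h1
      exact mul_left_cancel₀ hc0 h1
    exact ⟨⟨w, hnw⟩, Subtype.ext hw.symm⟩

theorem countNorm_three_step {n : ℕ} (h3 : 3 ∣ n) :
    countNorm n = countNorm (n / 3) := by
  apply countNorm_step (q := (⟨1, -1⟩ : Eis)) prime_lam.ne_zero
    (Nat.mul_div_cancel' h3).symm norm_lam
  intro z hz
  apply lam_dvd_of_three_dvd_norm
  rw [hz]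
  exact_mod_cast Int.natCast_dvd_natCast.2 h3

theorem intCast_dvd_self_of_norm {p n : ℕ} (hp : p.Prime) (h2 : p % 3 = 2) (hpn : p ∣ n)
    {z : Eis} (hz : norm z = (n : ℤ)) : ((p : ℤ) : Eis) ∣ z := by
  apply intCast_dvd_of_dvd_norm (prime_intCast_of_mod3_eq_two hp h2)
  rw [hz]
  exact_mod_cast Int.natCast_dvd_natCast.2 hpn

theorem countNorm_inert_step {p n : ℕ} (hp : p.Prime) (h2 : p % 3 = 2) (hpn : p ^ 2 ∣ n) :
    countNorm n = countNorm (n / p ^ 2) := by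
  have hq : ((p : ℤ) : Eis) ≠ 0 := by
    intro h
    have := congrArg Eis.re h
    simp at this
    exact hp.ne_zero (by exact_mod_cast this)
  apply countNorm_step hq (Nat.mul_div_cancel' hpn).symm
    (by rw [norm_intCast]; push_cast; ring)
  intro z hz
  exact intCast_dvd_self_of_norm hp h2 (dvd_trans (dvd_pow_self p two_ne_zero) hpn) hz

theorem countNorm_inert_kill {p n : ℕ} (hp : p.Prime) (h2 : p % 3 = 2) (hpn : p ∣ n)
    (hpn2 : ¬ p ^ 2 ∣ n) : countNorm n = 0 := by
  rw [countNorm]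
  rw [Nat.card_eq_zero]
  left
  constructor
  rintro ⟨z, hz⟩
  obtain ⟨w, hw⟩ := intCast_dvd_self_of_norm hp h2 hpn hz
  apply hpn2
  have h1 : (n : ℤ) = (p : ℤ) ^ 2 * norm w := by
    rw [← hz, hw, norm_mul, norm_intCast]
  have h3 : ((p ^ 2 : ℕ) : ℤ) ∣ (n : ℤ) := ⟨norm w, by push_cast; exact_mod_cast h1⟩
  exact_mod_cast h3

theorem exists_decomp {p m : ℕ} (hp : p.Prime) {π : Eis} (hnπ : norm π = (p : ℤ))
    (hm : ¬ p ∣ m) : ∀ k : ℕ, ∀ z : Eis, norm z = ((p ^ k * m : ℕ) : ℤ) →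
      ∃ i ≤ k, ∃ w : Eis, norm w = (m : ℤ) ∧ z = π ^ i * (conj π) ^ (k - i) * w := by
  have hπ : Prime π := prime_of_norm_prime (by rw [hnπ]; exact Nat.prime_iff_prime_int.1 hp)
  have hp0 : ((p : ℕ) : ℤ) ≠ 0 := by exact_mod_cast hp.ne_zero
  intro k
  induction k with
  | zero =>
    intro z hz
    refine ⟨0, le_rfl, z, by simpa using hz, by simp⟩
  | succ k ih =>
    intro z hz
    have hdl : π ∣ z * conj z := by
      rw [mul_conj, hz]
      have h6 : ((p : ℕ) : ℤ) ∣ ((p ^ (k+1) * m : ℕ) : ℤ) :=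
        Int.natCast_dvd_natCast.2 ⟨p ^ k * m, by ring⟩
      have h5 : (((p : ℕ) : ℤ) : Eis) ∣ ((((p ^ (k+1) * m : ℕ) : ℤ)) : Eis) :=
        (Int.castRingHom Eis).map_dvd h6
      refine dvd_trans ⟨conj π, ?_⟩ h5
      rw [mul_conj, hnπ]
    rcases hπ.2.2 _ _ hdl with hdz | hdz
    · obtain ⟨z₁, hz₁⟩ := hdz
      have hnz₁ : norm z₁ = ((p ^ k * m : ℕ) : ℤ) := by
        have h1 : norm π * norm z₁ = ((p ^ (k+1) * m : ℕ) : ℤ) := by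
          rw [← norm_mul, ← hz₁, hz]
        rw [hnπ] at h1
        apply mul_left_cancel₀ hp0
        rw [h1]; push_cast; ring
      obtain ⟨i, hik, w, hnw, hzw⟩ := ih z₁ hnz₁
      refine ⟨i + 1, by omega, w, hnw, ?_⟩
      rw [hz₁, hzw]
      have : k + 1 - (i + 1) = k - i := by omega
      rw [this, pow_succ]
      ring
    · have hdz' : conj π ∣ z := by
        have h3 := map_dvd conj hdz
        rwa [conj_conj] at h3
      obtain ⟨z₁, hz₁⟩ := hdz'
      have hnz₁ : norm z₁ = ((p ^ k * m : ℕ) : ℤ) := by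
        have h1 : norm (conj π) * norm z₁ = ((p ^ (k+1) * m : ℕ) : ℤ) := by
          rw [← norm_mul, ← hz₁, hz]
        rw [norm_conj, hnπ] at h1
        apply mul_left_cancel₀ hp0
        rw [h1]; push_cast; ring
      obtain ⟨i, hik, w, hnw, hzw⟩ := ih z₁ hnz₁
      refine ⟨i, by omega, w, hnw, ?_⟩
      rw [hz₁, hzw]
      have : k + 1 - i = (k - i) + 1 := by omega
      rw [this, pow_succ]
      ring

theorem countNorm_split {p m k n : ℕ} (hp : p.Prime) (h1 : p % 3 = 1) (hm : ¬ p ∣ m)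
    (hn : n = p ^ k * m) : countNorm n = (k + 1) * countNorm m := by
  obtain ⟨π, hnπ⟩ := exists_norm_eq_prime hp h1
  have hπ : Prime π := prime_of_norm_prime (by rw [hnπ]; exact Nat.prime_iff_prime_int.1 hp)
  have hπ' : Prime (conj π) := prime_of_norm_prime
    (by rw [norm_conj, hnπ]; exact Nat.prime_iff_prime_int.1 hp)
  have hna : ¬ Associated π (conj π) := not_associated_conj hp h1 hnπ
  have hnd1 : ¬ π ∣ conj π := fun h =>
    hna (hπ.irreducible.associated_of_dvd hπ'.irreducible h)
  have hnd2 : ¬ conj π ∣ π := fun h =>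
    hna ((hπ'.irreducible.associated_of_dvd hπ.irreducible h).symm)
  have hπm : ∀ w : Eis, norm w = (m : ℤ) → ¬ π ∣ w := by
    intro w hw hdvd
    have := norm_dvd_norm hdvd
    rw [hnπ, hw] at this
    exact hm (by exact_mod_cast this)
  have hπ'm : ∀ w : Eis, norm w = (m : ℤ) → ¬ conj π ∣ w := by
    intro w hw hdvd
    have := norm_dvd_norm hdvd
    rw [norm_conj, hnπ, hw] at this
    exact hm (by exact_mod_cast this)
  have hcount : countNorm n = Nat.card (Fin (k + 1) × {w : Eis // norm w = (m : ℤ)}) := by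
    refine Nat.card_congr (Equiv.symm (Equiv.ofBijective
      (fun iw : Fin (k + 1) × {w : Eis // norm w = (m : ℤ)} =>
        (⟨π ^ (iw.1 : ℕ) * (conj π) ^ (k - (iw.1 : ℕ)) * iw.2.1, by
          rw [norm_mul, norm_mul, norm_pow, norm_pow, norm_conj, hnπ, iw.2.2, hn]
          push_cast
          rw [← pow_add]
          congr 2
          omega⟩ : {z : Eis // norm z = (n : ℤ)})) ⟨?_, ?_⟩))
    · -- injective
      rintro ⟨i, w⟩ ⟨j, w'⟩ hEq
      have hEq' : π ^ (i : ℕ) * (conj π) ^ (k - (i : ℕ)) * w.1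
          = π ^ (j : ℕ) * (conj π) ^ (k - (j : ℕ)) * w'.1 := congrArg Subtype.val hEq
      have hij : (i : ℕ) = (j : ℕ) := by
        by_contra hne
        -- wlog i < j or j < i
        rcases Nat.lt_or_ge (i : ℕ) (j : ℕ) with hlt | hge
        · -- cancel π^i
          have hsplit : π ^ (j : ℕ) = π ^ (i : ℕ) * π ^ ((j : ℕ) - (i : ℕ)) := by
            rw [← pow_add]; congr 1; omega
          rw [hsplit] at hEq'
          have hc : (conj π) ^ (k - (i : ℕ)) * w.1
              = π ^ ((j : ℕ) - (i : ℕ)) * ((conj π) ^ (k - (j : ℕ)) * w'.1) := by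
            apply mul_left_cancel₀ (pow_ne_zero (i : ℕ) hπ.ne_zero)
            linear_combination hEq'
          have hdvd : π ∣ (conj π) ^ (k - (i : ℕ)) * w.1 := by
            rw [hc]
            exact Dvd.dvd.mul_right (dvd_pow_self π (by omega)) _
          rcases hπ.2.2 _ _ hdvd with h | h
          · exact hnd1 (hπ.dvd_of_dvd_pow h)
          · exact hπm w.1 w.2 h
        · have hlt : (j : ℕ) < (i : ℕ) := by omega
          have hsplit : π ^ (i : ℕ) = π ^ (j : ℕ) * π ^ ((i : ℕ) - (j : ℕ)) := by
            rw [← pow_add]; congr 1; omega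
          rw [hsplit] at hEq'
          have hc : π ^ ((i : ℕ) - (j : ℕ)) * ((conj π) ^ (k - (i : ℕ)) * w.1)
              = (conj π) ^ (k - (j : ℕ)) * w'.1 := by
            apply mul_left_cancel₀ (pow_ne_zero (j : ℕ) hπ.ne_zero)
            linear_combination hEq'
          have hdvd : π ∣ (conj π) ^ (k - (j : ℕ)) * w'.1 := by
            rw [← hc]
            exact Dvd.dvd.mul_right (dvd_pow_self π (by omega)) _
          rcases hπ.2.2 _ _ hdvd with h | h
          · exact hnd1 (hπ.dvd_of_dvd_pow h)
          · exact hπm w'.1 w'.2 h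
      refine Prod.ext (Fin.ext hij) ?_
      have : w.1 = w'.1 := by
        apply mul_left_cancel₀
          (mul_ne_zero (pow_ne_zero _ hπ.ne_zero) (pow_ne_zero _ hπ'.ne_zero))
        rw [hEq', hij]
      exact Subtype.ext this
    · -- surjective
      rintro ⟨z, hz⟩
      have hz' : norm z = ((p ^ k * m : ℕ) : ℤ) := by rw [hz, hn]
      obtain ⟨i, hik, w, hnw, hzw⟩ := exists_decomp hp hnπ hm k z hz'
      exact ⟨⟨⟨i, by omega⟩, ⟨w, hnw⟩⟩, Subtype.ext hzw.symm⟩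
  rw [hcount, Nat.card_prod, Nat.card_eq_fintype_card, Fintype.card_fin, countNorm]

end Eis

/-! ### The divisor-sum side -/

def chi (d : ℕ) : ℤ := if d % 3 = 1 then 1 else if d % 3 = 2 then -1 else 0

theorem chi_mul (a b : ℕ) : chi (a * b) = chi a * chi b := by
  unfold chi
  have h : (a * b) % 3 = a % 3 * (b % 3) % 3 := Nat.mul_mod a b 3
  have ha : a % 3 = 0 ∨ a % 3 = 1 ∨ a % 3 = 2 := by omega
  have hb : b % 3 = 0 ∨ b % 3 = 1 ∨ b % 3 = 2 := by omega
  rcases ha with h1 | h1 | h1 <;> rcases hb with h2 | h2 | h2 <;>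
    rw [h, h1, h2] <;> norm_num

theorem chi_pow (p i : ℕ) : chi (p ^ i) = chi p ^ i := by
  induction i with
  | zero => simp [chi]
  | succ j ih => rw [pow_succ, chi_mul, ih, pow_succ]

theorem chi_zero_of_dvd {d : ℕ} (h : 3 ∣ d) : chi d = 0 := by
  unfold chi
  have h0 : d % 3 = 0 := by omega
  rw [h0]
  norm_num

def chiArith : ArithmeticFunction ℤ := ⟨chi, by simp [chi]⟩

theorem chiArith_isMult : chiArith.IsMultiplicative := by
  refine ⟨by simp [chiArith, chi], ?_⟩
  intro m n _
  exact chi_mul m n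

/-- the divisor sum `∑_{d ∣ n} χ(d)` -/
def Sfun (n : ℕ) : ℤ := ∑ d ∈ n.divisors, chi d

theorem Sfun_eq (n : ℕ) : Sfun n = ((ArithmeticFunction.zeta : ArithmeticFunction ℕ) *
    chiArith : ArithmeticFunction ℤ) n := by
  rw [ArithmeticFunction.coe_zeta_mul_apply]
  rfl

theorem Sfun_mult {m n : ℕ} (h : m.Coprime n) : Sfun (m * n) = Sfun m * Sfun n := by
  rw [Sfun_eq, Sfun_eq, Sfun_eq]
  exact (ArithmeticFunction.isMultiplicative_zeta.natCast.mul chiArith_isMult).map_mul_of_coprime h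

theorem Sfun_prime_pow {p : ℕ} (hp : p.Prime) (k : ℕ) :
    Sfun (p ^ k) = ∑ i ∈ Finset.range (k + 1), chi p ^ i := by
  rw [Sfun, Nat.sum_divisors_prime_pow hp]
  exact Finset.sum_congr rfl fun i _ => chi_pow p i

theorem Sfun_one : Sfun 1 = 1 := by
  simp [Sfun, chi]

theorem sum_zero_pow (k : ℕ) : ∑ i ∈ Finset.range (k + 1), (0 : ℤ) ^ i = 1 := by
  induction k with
  | zero => simp
  | succ j ih => rw [Finset.sum_range_succ, ih, zero_pow (by omega : j + 1 ≠ 0), add_zero]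

theorem sum_one_pow (k : ℕ) : ∑ i ∈ Finset.range (k + 1), (1 : ℤ) ^ i = (k + 1 : ℤ) := by
  simp

theorem Sfun_three_pow (k : ℕ) : Sfun (3 ^ k) = 1 := by
  rw [Sfun_prime_pow Nat.prime_three k]
  have : chi 3 = 0 := by simp [chi]
  rw [this]
  exact sum_zero_pow k

theorem chi_one_mod {p : ℕ} (h : p % 3 = 1) : chi p = 1 := by simp [chi, h]

theorem chi_two_mod {p : ℕ} (h : p % 3 = 2) : chi p = -1 := by simp [chi, h]

theorem Sfun_three {n : ℕ} (hn : n ≠ 0) (h3 : 3 ∣ n) : Sfun n = Sfun (n / 3) := by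
  have hn3 : n / 3 ≠ 0 := by omega
  have key : ∀ m : ℕ, Sfun m = ∑ d ∈ m.divisors.filter (fun d => ¬ 3 ∣ d), chi d := by
    intro m
    rw [Sfun]
    symm
    apply Finset.sum_filter_of_ne
    intro d _ hd h3d
    exact hd (chi_zero_of_dvd h3d)
  rw [key n, key (n / 3)]
  congr 1
  ext d
  simp only [Finset.mem_filter, Nat.mem_divisors]
  constructor
  · rintro ⟨⟨hdn, _⟩, hnd3⟩
    refine ⟨⟨?_, hn3⟩, hnd3⟩
    have hcop : Nat.Coprime d 3 :=
      Nat.coprime_comm.1 ((Nat.Prime.coprime_iff_not_dvd Nat.prime_three).2 hnd3)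
    have hd3 : d ∣ 3 * (n / 3) := by rwa [Nat.mul_div_cancel' h3]
    exact Nat.Coprime.dvd_of_dvd_mul_left hcop hd3
  · rintro ⟨⟨hdn, _⟩, hnd3⟩
    exact ⟨⟨hdn.trans (Nat.div_dvd_of_dvd h3), hn⟩, hnd3⟩

theorem Sfun_pk_mul {p k m : ℕ} (hp : p.Prime) (hm : ¬ p ∣ m) :
    Sfun (p ^ k * m) = (∑ i ∈ Finset.range (k + 1), chi p ^ i) * Sfun m := by
  rw [Sfun_mult (Nat.Coprime.pow_left _ ((hp.coprime_iff_not_dvd).2 hm)),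
    Sfun_prime_pow hp]

theorem geom_neg_one_drop {k : ℕ} (hk : 2 ≤ k) :
    ∑ i ∈ Finset.range (k + 1), (-1 : ℤ) ^ i
      = ∑ i ∈ Finset.range (k - 2 + 1), (-1 : ℤ) ^ i := by
  rw [neg_one_geom_sum, neg_one_geom_sum]
  simp only [Nat.even_iff]
  have h : (k + 1) % 2 = (k - 2 + 1) % 2 := by omega
  rw [h]

theorem main_count : ∀ n : ℕ, 0 < n → (Eis.countNorm n : ℤ) = 6 * Sfun n := by
  intro n
  induction n using Nat.strong_induction_on with
  | _ n ih =>
    intro hn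
    by_cases h1 : n = 1
    · subst h1; rw [Eis.countNorm_one, Sfun_one]; norm_num
    · have hp : n.minFac.Prime := Nat.minFac_prime h1
      set p := n.minFac with hpdef
      have hpn : p ∣ n := Nat.minFac_dvd n
      have hp2 : 2 ≤ p := hp.two_le
      have hn0 : n ≠ 0 := by omega
      have hmod : p % 3 = 0 ∨ p % 3 = 1 ∨ p % 3 = 2 := by omega
      rcases hmod with hm0 | hm1 | hm2
      · -- p = 3
        have hp3 : 3 = p := (Nat.prime_dvd_prime_iff_eq Nat.prime_three hp).1 (by omega)
        have h3n : 3 ∣ n := hp3 ▸ hpn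
        have hlt : n / 3 < n := Nat.div_lt_self (by omega) (by omega)
        have hpos : 0 < n / 3 := by omega
        rw [Eis.countNorm_three_step h3n, Sfun_three hn0 h3n]
        exact ih _ hlt hpos
      · -- split case
        set k := n.factorization p with hkdef
        set m := n / p ^ k with hmdef
        have hdecomp : p ^ k * m = n := Nat.ordProj_mul_ordCompl_eq_self n p
        have hcopm : ¬ p ∣ m :=
          (hp.coprime_iff_not_dvd).1 (Nat.coprime_ordCompl hp hn0)
        have hm0 : m ≠ 0 := by
          intro h
          rw [h, mul_zero] at hdecomp
          exact hn0 hdecomp.symm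
        have hk1 : 1 ≤ k := (hp.pow_dvd_iff_le_factorization hn0).1 (by simpa using hpn)
        have hpk : 1 < p ^ k := Nat.one_lt_pow (by omega) (by omega)
        have hmlt : m < n := by
          rw [hmdef]
          exact Nat.div_lt_self (by omega) hpk
        have hrec := ih m hmlt (Nat.pos_of_ne_zero hm0)
        rw [Eis.countNorm_split hp hm1 hcopm hdecomp.symm]
        rw [← hdecomp, Sfun_pk_mul hp hcopm, chi_one_mod hm1, sum_one_pow]
        push_cast
        linear_combination ((k : ℤ) + 1) * hrec
      · -- inert case
        set k := n.factorization p with hkdef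
        set m := n / p ^ k with hmdef
        have hdecomp : p ^ k * m = n := Nat.ordProj_mul_ordCompl_eq_self n p
        have hcopm : ¬ p ∣ m :=
          (hp.coprime_iff_not_dvd).1 (Nat.coprime_ordCompl hp hn0)
        have hm0 : m ≠ 0 := by
          intro h
          rw [h, mul_zero] at hdecomp
          exact hn0 hdecomp.symm
        have hk1 : 1 ≤ k := (hp.pow_dvd_iff_le_factorization hn0).1 (by simpa using hpn)
        by_cases hsq : p ^ 2 ∣ n
        · have hk2 : 2 ≤ k := (hp.pow_dvd_iff_le_factorization hn0).1 hsq
          have hquot : n / p ^ 2 = p ^ (k - 2) * m := by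
            apply Nat.div_eq_of_eq_mul_left (by positivity)
            calc n = p ^ k * m := hdecomp.symm
              _ = p ^ (k - 2 + 2) * m := by rw [show k - 2 + 2 = k by omega]
              _ = p ^ (k - 2) * m * p ^ 2 := by rw [pow_add]; ring
          have hlt : n / p ^ 2 < n :=
            Nat.div_lt_self (by omega) (Nat.one_lt_pow two_ne_zero (by omega))
          have hpos : 0 < n / p ^ 2 :=
            Nat.div_pos (Nat.le_of_dvd (by omega) hsq) (by positivity)
          have hrec := ih _ hlt hpos
          have hS2 : Sfun (n / p ^ 2)
              = (∑ i ∈ Finset.range (k - 2 + 1), (-1 : ℤ) ^ i) * Sfun m := by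
            rw [hquot, Sfun_pk_mul hp hcopm, chi_two_mod hm2]
          rw [Eis.countNorm_inert_step hp hm2 hsq, hrec, hS2]
          conv_rhs => rw [← hdecomp, Sfun_pk_mul hp hcopm, chi_two_mod hm2,
            geom_neg_one_drop hk2]
        · -- kill case
          have hk1' : k = 1 := by
            have h2' : ¬ 2 ≤ k := fun h => hsq ((hp.pow_dvd_iff_le_factorization hn0).2 h)
            omega
          have hS0 : Sfun n = 0 := by
            rw [← hdecomp, Sfun_pk_mul hp hcopm, chi_two_mod hm2, hk1']
            norm_num [Finset.sum_range_succ]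
          rw [Eis.countNorm_inert_kill hp hm2 hpn hsq, hS0]
          norm_num

/-- #{(a,b) ∈ ℤ² : a²+ab+b² = n} = 6·∑_{d∣n} χ₃(d). -/
theorem eisenstein_norm_form_count (n : ℕ) (hn : 0 < n) :
    (({p : ℤ × ℤ | p.1 ^ 2 + p.1 * p.2 + p.2 ^ 2 = (n : ℤ)}.ncard : ℤ)) =
      6 * ∑ d ∈ n.divisors,
        (if d % 3 = 1 then (1 : ℤ) else if d % 3 = 2 then -1 else 0) := by
  have hsum : (∑ d ∈ n.divisors,
      (if d % 3 = 1 then (1 : ℤ) else if d % 3 = 2 then -1 else 0)) = Sfun n := rfl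
  have hcard : {p : ℤ × ℤ | p.1 ^ 2 + p.1 * p.2 + p.2 ^ 2 = (n : ℤ)}.ncard
      = Eis.countNorm n := by
    rw [← Nat.card_coe_set_eq]
    apply Nat.card_congr
    refine
      { toFun := fun x => ⟨⟨x.1.1, -x.1.2⟩, ?_⟩
        invFun := fun z => ⟨(z.1.re, -z.1.im), ?_⟩
        left_inv := ?_
        right_inv := ?_ }
    · have h := x.2
      simp only [Set.mem_setOf_eq] at h
      show Eis.norm ⟨x.1.1, -x.1.2⟩ = (n : ℤ)
      rw [Eis.norm]
      simp only [Eis.mk_re, Eis.mk_im]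
      linear_combination h
    · have h := z.2
      rw [Eis.norm] at h
      simp only [Set.mem_setOf_eq]
      linear_combination h
    · intro x
      apply Subtype.ext
      simp
    · intro z
      apply Subtype.ext
      apply Eis.ext <;> simp
  rw [hsum, hcard]
  exact main_count n hn
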